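/- arXiv:2006.06515 — 7 statements merged into one kernel-verified Lean document; each statement's English description precedes it below -/
import Mathlib

section
/- For 0 ≤ z < 1 and nonnegative integer n, B(n + 1/2, 0, z) = 2(artanh(√z) - Σ_{k=0}^{n-1} z^(k+1/2)/(2k+1)). -/
/-!
On `(0, 1)` the integrand is the derivative of `2 (artanh √t - ∑_{k<n} t^(k+1/2)/(2k+1))`:
`artanh √t` contributes `1/(2√t (1-t))`, the `k`-th term `t^k/(2√t)`, and
`1/(1-t) - ∑_{k<n} t^k = t^n/(1-t)`. This primitive is continuous on `[0, 1)` and vanishes at `0`,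
and since the integrand is nonnegative, the fundamental theorem of calculus needs no separate
integrability argument at the singularity `t = 0`.
-/

open Set

/-- The inverse hyperbolic tangent, `artanh x = (1/2) log((1+x)/(1-x))`. -/
noncomputable def artanh (x : ℝ) : ℝ := (1/2) * Real.log ((1 + x) / (1 - x))

theorem intervalIntegral.integral_eq_sub_of_hasDerivAt_of_nonneg {f f' : ℝ → ℝ} {a b : ℝ}
    (hab : a ≤ b) (hcont : ContinuousOn f (Icc a b))
    (hderiv : ∀ x ∈ Ioo a b, HasDerivAt f (f' x) x) (hpos : ∀ x ∈ Ioo a b, 0 ≤ f' x) :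
    ∫ x in a..b, f' x = f b - f a := by
  refine integral_eq_sub_of_hasDerivAt_of_le hab hcont hderiv ?_
  refine intervalIntegrable_deriv_of_nonneg (by rwa [uIcc_of_le hab]) ?_ ?_ <;>
    simpa only [min_eq_left hab, max_eq_right hab]

theorem inv_one_sub_sub_geom_sum {K : Type*} [Field K] {x : K} (hx : x ≠ 1) (n : ℕ) :
    (1 - x)⁻¹ - ∑ k ∈ Finset.range n, x ^ k = x ^ n / (1 - x) := by
  have : 1 - x ≠ 0 := sub_ne_zero.mpr hx.symm
  rw [geom_sum_eq hx, ← neg_sub 1 x, div_neg]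
  field_simp
  ring

theorem Real.rpow_natCast_add_half_sub_one (k : ℕ) {t : ℝ} (ht : 0 < t) :
    t ^ ((k : ℝ) + 1 / 2 - 1) = t ^ k / √t := by
  rw [show (k : ℝ) + 1 / 2 - 1 = k + -(1 / 2) by ring, Real.rpow_add ht, Real.rpow_natCast,
    Real.rpow_neg ht.le, ← Real.sqrt_eq_rpow, div_eq_mul_inv]

theorem artanh_zero : artanh 0 = 0 := by
  simp [artanh]

theorem hasDerivAt_artanh {x : ℝ} (hx : x ∈ Ioo (-1) 1) :
    HasDerivAt artanh (1 - x ^ 2)⁻¹ x := by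
  obtain ⟨hx₁, hx₂⟩ := hx
  have hquot : HasDerivAt (fun y => (1 + y) / (1 - y)) (2 / (1 - x) ^ 2) x := by
    refine (((hasDerivAt_id x).const_add 1).div ((hasDerivAt_id x).const_sub 1)
      (by simp only [id]; linarith)).congr_deriv ?_
    simp only [id]
    ring
  refine ((hquot.log (div_ne_zero (by linarith) (by linarith))).const_mul (1 / 2)).congr_deriv ?_
  have : 1 - x ≠ 0 := by linarith
  have : 1 + x ≠ 0 := by linarith
  rw [show 1 - x ^ 2 = (1 - x) * (1 + x) by ring]
  field_simp

theorem continuousOn_artanh : ContinuousOn artanh (Ioo (-1) 1) :=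
  fun _ hx => (hasDerivAt_artanh hx).continuousAt.continuousWithinAt

theorem Real.sqrt_mem_Ioo_neg_one_one {t : ℝ} (ht : t < 1) : √t ∈ Ioo (-1) 1 :=
  ⟨by linarith [Real.sqrt_nonneg t], (Real.sqrt_lt' one_pos).mpr (by simpa using ht)⟩

theorem hasDerivAt_artanh_sqrt {t : ℝ} (ht₀ : 0 < t) (ht₁ : t < 1) :
    HasDerivAt (fun s => artanh √s) (2 * √t * (1 - t))⁻¹ t := by
  refine ((hasDerivAt_artanh (Real.sqrt_mem_Ioo_neg_one_one ht₁)).comp t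
    (Real.hasDerivAt_sqrt ht₀.ne')).congr_deriv ?_
  rw [Real.sq_sqrt ht₀.le]
  field_simp

theorem hasDerivAt_rpow_natCast_add_half_div (k : ℕ) {t : ℝ} (ht : 0 < t) :
    HasDerivAt (fun s => s ^ ((k : ℝ) + 1 / 2) / (2 * (k : ℝ) + 1)) (t ^ k / (2 * √t)) t := by
  refine ((Real.hasDerivAt_rpow_const (p := (k : ℝ) + 1 / 2) (Or.inl ht.ne')).div_const
    (2 * (k : ℝ) + 1)).congr_deriv ?_
  rw [Real.rpow_natCast_add_half_sub_one k ht]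
  field_simp

noncomputable def incompleteBetaHalfPrimitive (n : ℕ) (t : ℝ) : ℝ :=
  2 * (artanh √t - ∑ k ∈ Finset.range n, t ^ ((k : ℝ) + 1 / 2) / (2 * (k : ℝ) + 1))

theorem incompleteBetaHalfPrimitive_zero (n : ℕ) : incompleteBetaHalfPrimitive n 0 = 0 := by
  rw [incompleteBetaHalfPrimitive, Real.sqrt_zero, artanh_zero, Finset.sum_eq_zero fun k _ => by
    rw [Real.zero_rpow (by positivity), zero_div], sub_zero, mul_zero]

theorem hasDerivAt_incompleteBetaHalfPrimitive (n : ℕ) {t : ℝ} (ht₀ : 0 < t) (ht₁ : t < 1) :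
    HasDerivAt (incompleteBetaHalfPrimitive n) (t ^ ((n : ℝ) + 1 / 2 - 1) / (1 - t)) t := by
  refine (((hasDerivAt_artanh_sqrt ht₀ ht₁).sub (HasDerivAt.fun_sum
    fun k _ => hasDerivAt_rpow_natCast_add_half_div k ht₀)).const_mul 2).congr_deriv ?_
  have hsqrt : √t ≠ 0 := (Real.sqrt_pos.mpr ht₀).ne'
  have hsub : 1 - t ≠ 0 := by linarith
  rw [← Finset.sum_div, Real.rpow_natCast_add_half_sub_one n ht₀, div_right_comm,
    ← inv_one_sub_sub_geom_sum ht₁.ne]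
  field_simp

theorem continuousOn_incompleteBetaHalfPrimitive (n : ℕ) :
    ContinuousOn (incompleteBetaHalfPrimitive n) (Iio 1) := by
  have hartanh : ContinuousOn (fun t => artanh √t) (Iio 1) :=
    continuousOn_artanh.comp Real.continuous_sqrt.continuousOn
      fun _ => Real.sqrt_mem_Ioo_neg_one_one
  refine (hartanh.sub (continuousOn_finsetSum _ fun k _ => ?_)).const_smul (2 : ℝ)
  exact ((Real.continuous_rpow_const (by positivity)).div_const _).continuousOn

/-- For `0 ≤ z < 1` and nonnegative integer `n`,
`B(n+1/2,0,z) = 2(artanh √z - ∑_{k=0}^{n-1} z^(k+1/2)/(2k+1))`. -/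
theorem incompleteBeta_half_artanh (z : ℝ) (n : ℕ) (hz0 : 0 ≤ z) (hz1 : z < 1) :
    ∫ t in (0:ℝ)..z, t ^ (((n : ℝ) + 1/2) - 1) / (1 - t) =
      2 * (artanh (Real.sqrt z) -
        ∑ k ∈ Finset.range n, z ^ ((k : ℝ) + 1/2) / (2 * (k : ℝ) + 1)) := by
  have hcont : ContinuousOn (incompleteBetaHalfPrimitive n) (Icc 0 z) :=
    (continuousOn_incompleteBetaHalfPrimitive n).mono fun t ht => ht.2.trans_lt hz1
  have hderiv : ∀ t ∈ Ioo 0 z, HasDerivAt (incompleteBetaHalfPrimitive n)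
      (t ^ ((n : ℝ) + 1 / 2 - 1) / (1 - t)) t :=
    fun t ht => hasDerivAt_incompleteBetaHalfPrimitive n ht.1 (ht.2.trans hz1)
  have hpos : ∀ t ∈ Ioo 0 z, 0 ≤ t ^ ((n : ℝ) + 1 / 2 - 1) / (1 - t) := fun t ht =>
    div_nonneg (Real.rpow_nonneg ht.1.le _) (by linarith [ht.2])
  rw [intervalIntegral.integral_eq_sub_of_hasDerivAt_of_nonneg hz0 hcont hderiv hpos,
    incompleteBetaHalfPrimitive_zero, sub_zero, incompleteBetaHalfPrimitive]
end

section
/- For 0 ≤ z < 1 and nonnegative integer n, B(-n + 1/2, 0, z) = 2(artanh(√z) - Σ_{k=1}^n z^(1/2-k)/(2k-1)). -/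
/-!
With `x = √z`, the series for `ν = 1/2` is
`∑ 2 x^(2k+1)/(2k+1) = log (1 + x) - log (1 - x) = 2 artanh x`.
Lowering `ν` by one shifts the series by one index and prepends the term `z^(ν-1)/(ν-1)`;
for `ν = -n - 1/2` this term is `-2 z^(1/2-(n+1))/(2(n+1)-1)`, so induction on `n` produces
the finite sum.
-/

open Finset

lemma hasSum_pow_two_mul_add_one_div_artanh {x : ℝ} (hx : |x| < 1) :
    HasSum (fun k : ℕ => x ^ (2 * k + 1) / ((k : ℝ) + 1 / 2)) (2 * artanh x) := by
  have h1x : 0 < 1 + x := by linarith [neg_abs_le x]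
  have h2x : 0 < 1 - x := by linarith [le_abs_self x]
  rw [artanh, Real.log_div h1x.ne' h2x.ne', ← mul_assoc, mul_one_div_cancel two_ne_zero, one_mul]
  convert Real.hasSum_log_sub_log_of_abs_lt_one hx using 2 with k
  field_simp

lemma rpow_natCast_add_half {z : ℝ} (hz : 0 ≤ z) (k : ℕ) :
    z ^ ((k : ℝ) + 1 / 2) = √z ^ (2 * k + 1) := by
  rw [Real.sqrt_eq_rpow, ← Real.rpow_natCast, ← Real.rpow_mul hz]
  push_cast
  ring_nf

lemma hasSum_rpow_natCast_add_half_div {z : ℝ} (hz0 : 0 ≤ z) (hz1 : z < 1) :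
    HasSum (fun k : ℕ => z ^ ((k : ℝ) + 1 / 2) / ((k : ℝ) + 1 / 2)) (2 * artanh √z) := by
  have hx : |√z| < 1 := by
    rwa [abs_of_nonneg (Real.sqrt_nonneg z), Real.sqrt_lt' one_pos, one_pow]
  simpa only [rpow_natCast_add_half hz0] using hasSum_pow_two_mul_add_one_div_artanh hx

lemma HasSum.rpow_natCast_add_sub_one_div {z ν s : ℝ}
    (h : HasSum (fun k : ℕ => z ^ ((k : ℝ) + ν) / ((k : ℝ) + ν)) s) :
    HasSum (fun k : ℕ => z ^ ((k : ℝ) + (ν - 1)) / ((k : ℝ) + (ν - 1)))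
      (s + z ^ (ν - 1) / (ν - 1)) := by
  set g : ℕ → ℝ := fun k => z ^ ((k : ℝ) + (ν - 1)) / ((k : ℝ) + (ν - 1)) with hg
  have hshift :
      (fun k : ℕ => g (k + 1)) = fun k : ℕ => z ^ ((k : ℝ) + ν) / ((k : ℝ) + ν) := by
    ext k
    simp only [hg, Nat.cast_add_one, add_add_sub_cancel]
  have h0 : g 0 = z ^ (ν - 1) / (ν - 1) := by simp [hg]
  rw [← h0, ← sum_range_one g]
  exact (hasSum_nat_add_iff 1).mp (hshift ▸ h)

lemma hasSum_incompleteBeta_neg_half {z : ℝ} (hz0 : 0 ≤ z) (hz1 : z < 1) (n : ℕ) :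
    HasSum (fun k : ℕ => z ^ ((k : ℝ) + (-(n : ℝ) + 1/2)) / ((k : ℝ) + (-(n : ℝ) + 1/2)))
      (2 * (artanh √z - ∑ k ∈ Icc 1 n, z ^ (1/2 - (k : ℝ)) / (2 * (k : ℝ) - 1))) := by
  induction n with
  | zero => simpa using hasSum_rpow_natCast_add_half_div hz0 hz1
  | succ n ih =>
    have hν : -((n + 1 : ℕ) : ℝ) + 1/2 = (-(n : ℝ) + 1/2) - 1 := by push_cast; ring
    rw [hν]
    convert ih.rpow_natCast_add_sub_one_div using 1
    have hn : (2 * (n : ℝ) + 1) ≠ 0 := by positivity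
    have hn' : -(n : ℝ) + 1 / 2 - 1 = -(2 * n + 1) / 2 := by ring
    have hexp : (1 / 2 : ℝ) - ((n + 1 : ℕ) : ℝ) = -(2 * n + 1) / 2 := by push_cast; ring
    rw [sum_Icc_succ_top (by omega), hn', hexp]
    push_cast
    rw [show 2 * ((n : ℝ) + 1) - 1 = 2 * n + 1 by ring]
    field_simp
    ring

/-- For `0 ≤ z < 1` and nonnegative integer `n`, with `B(-n+1/2,0,z)` defined by the series
`∑_{k≥0} z^(k+ν)/(k+ν)`, we have
`B(-n+1/2,0,z) = 2(artanh √z - ∑_{k=1}^n z^(1/2-k)/(2k-1))`. -/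
theorem incompleteBeta_neg_half_artanh (z : ℝ) (n : ℕ) (hz0 : 0 ≤ z) (hz1 : z < 1) :
    ∑' k : ℕ, z ^ ((k : ℝ) + (-(n : ℝ) + 1/2)) / ((k : ℝ) + (-(n : ℝ) + 1/2)) =
      2 * (artanh (Real.sqrt z) -
        ∑ k ∈ Finset.Icc 1 n, z ^ (1/2 - (k : ℝ)) / (2 * (k : ℝ) - 1)) :=
  (hasSum_incompleteBeta_neg_half hz0 hz1 n).tsum_eq
end

section
/- For positive integers p ≤ q and 0 < z < 1, Σ_{k=0}^∞ z^k/(k + p/q) = -(q/p) · z^(-p/q) · (p/q) · Σ_{k=0}^{q-1} exp(-2πipk/q) log(1 - z^(1/q) exp(2πik/q)); equivalently, Σ_{k=0}^∞ z^(k+p/q)/(k + p/q) = -Σ_{k=0}^{q-1} exp(-2πipk/q) log(1 - z^(1/q) exp(2πik/q)). -/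
/-!
With `w = z^(1/q)` and `ζ = exp(2πi/q)`, expand each `-log(1 - w ζ^k)` as `∑ₙ (w ζ^k)ⁿ / n`.
Summing against `ζ^(-pk)` over `k < q`, orthogonality of the `q`-th roots of unity keeps exactly
the terms with `n ≡ p (mod q)`, each multiplied by `q`; since `0 < p ≤ q` these are the
`n = qm + p`, and `q w^(qm+p) / (qm+p) = z^(m+p/q) / (m+p/q)`.
-/
open Finset Complex

theorem IsPrimitiveRoot.sum_range_zpow_pow {K : Type*} [Field K] {ζ : K} {q : ℕ}
    (hζ : IsPrimitiveRoot ζ q) (j : ℤ) :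
    ∑ k ∈ range q, (ζ ^ j) ^ k = if (q : ℤ) ∣ j then (q : K) else 0 := by
  split_ifs with hj
  · simp [(hζ.zpow_eq_one_iff_dvd j).mpr hj]
  · rw [geom_sum_eq (mt (hζ.zpow_eq_one_iff_dvd j).mp hj), ← zpow_natCast, ← zpow_mul,
      mul_comm, zpow_mul, zpow_natCast, hζ.pow_eq_one, one_zpow, sub_self, zero_div]

theorem IsPrimitiveRoot.hasSum_ite_dvd_sub_neg_log {ζ w : ℂ} {q : ℕ}
    (hζ : IsPrimitiveRoot ζ q) (hw : ‖w‖ < 1) (p : ℕ) :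
    HasSum (fun n : ℕ => if (q : ℤ) ∣ n - p then q * w ^ n / n else 0)
      (-∑ k ∈ range q, (ζ ^ k)⁻¹ ^ p * log (1 - w * ζ ^ k)) := by
  have hlog : ∀ k ∈ range q, HasSum (fun n : ℕ => (ζ ^ ((n : ℤ) - p)) ^ k * (w ^ n / n))
      (-((ζ ^ k)⁻¹ ^ p * log (1 - w * ζ ^ k))) := by
    intro k hk
    have hq : q ≠ 0 := by grind
    have hζw : ‖w * ζ ^ k‖ < 1 := by simpa [hζ.norm'_eq_one hq] using hw
    have hterm (n : ℕ) : (ζ ^ ((n : ℤ) - p)) ^ k * (w ^ n / n) =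
        (ζ ^ k)⁻¹ ^ p * ((w * ζ ^ k) ^ n / n) := by
      rw [zpow_sub₀ (hζ.ne_zero hq), zpow_natCast, zpow_natCast]
      ring
    simp_rw [hterm, ← mul_neg]
    exact (hasSum_taylorSeries_neg_log hζw).mul_left _
  rw [← sum_neg_distrib]
  convert hasSum_sum hlog using 2 with n
  rw [← sum_mul, hζ.sum_range_zpow_pow]
  split_ifs <;> ring

theorem Nat.exists_mul_add_eq_of_intCast_dvd_sub {n p q : ℕ} (hn : n ≠ 0) (hpq : p ≤ q)
    (h : (q : ℤ) ∣ n - p) : ∃ m, q * m + p = n := by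
  obtain ⟨t, ht⟩ := h
  have ht0 : 0 ≤ t := by
    by_contra! ht0
    have : (q : ℤ) * t ≤ q * -1 := mul_le_mul_of_nonneg_left (by omega) (by positivity)
    omega
  lift t to ℕ using ht0
  exact ⟨t, by omega⟩

theorem hasSum_ite_intCast_dvd_sub_iff {α : Type*} [AddCommMonoid α] [TopologicalSpace α]
    {p q : ℕ} (hq : q ≠ 0) (hpq : p ≤ q) {f : ℕ → α} (hf0 : f 0 = 0) {a : α} :
    HasSum (fun n : ℕ => if (q : ℤ) ∣ n - p then f n else 0) a ↔
      HasSum (fun m => f (q * m + p)) a := by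
  have hinj : Function.Injective fun m => q * m + p := fun a b hab => by
    simpa [hq] using hab
  rw [← hinj.hasSum_iff]
  · simp [Function.comp_def]
  · intro n hn
    split_ifs with hdvd
    · obtain rfl | hn0 := eq_or_ne n 0
      · exact hf0
      · exact absurd (Nat.exists_mul_add_eq_of_intCast_dvd_sub hn0 hpq hdvd) hn
    · rfl

theorem Real.rpow_add_div_div_eq_mul_pow_div {z : ℝ} (hz : 0 ≤ z) {q : ℕ} (hq : q ≠ 0)
    (m p : ℕ) :
    z ^ ((m : ℝ) + p / q) / ((m : ℝ) + p / q) =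
      q * (z ^ ((1 : ℝ) / q)) ^ (q * m + p) / ((q * m + p : ℕ) : ℝ) := by
  rw [← Real.rpow_natCast, ← Real.rpow_mul hz]
  push_cast
  field_simp

open Complex in
/-- For positive integers `p ≤ q` and `0 < z < 1`,
`∑_{k≥0} z^k/(k + p/q) = -(q/p) z^(-p/q) (p/q) ∑_{k=0}^{q-1} e^{-2πipk/q} log(1 - z^{1/q} e^{2πik/q})`,
and equivalently
`∑_{k≥0} z^(k+p/q)/(k + p/q) = -∑_{k=0}^{q-1} e^{-2πipk/q} log(1 - z^{1/q} e^{2πik/q})`. -/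
theorem tsum_eq_log_sum (p q : ℕ) (hp : 0 < p) (hpq : p ≤ q) (z : ℝ)
    (hz0 : 0 < z) (hz1 : z < 1) :
    ((∑' k : ℕ, z ^ k / ((k : ℝ) + (p : ℝ) / q) : ℝ) : ℂ) =
      -((q : ℂ) / p) * ((z ^ (-((p : ℝ) / q)) : ℝ) : ℂ) * ((p : ℂ) / q) *
        ∑ k ∈ Finset.range q,
          Complex.exp (-(2 * Real.pi * Complex.I * p * k) / q) *
            Complex.log (1 - ((z ^ ((1 : ℝ) / q) : ℝ) : ℂ) *
              Complex.exp (2 * Real.pi * Complex.I * k / q)) ∧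
    ((∑' k : ℕ, z ^ ((k : ℝ) + (p : ℝ) / q) / ((k : ℝ) + (p : ℝ) / q) : ℝ) : ℂ) =
      -∑ k ∈ Finset.range q,
          Complex.exp (-(2 * Real.pi * Complex.I * p * k) / q) *
            Complex.log (1 - ((z ^ ((1 : ℝ) / q) : ℝ) : ℂ) *
              Complex.exp (2 * Real.pi * Complex.I * k / q)) := by
  have hq : q ≠ 0 := (hp.trans_le hpq).ne'
  set ζ := exp (2 * Real.pi * I / q)
  have hζ : IsPrimitiveRoot ζ q := isPrimitiveRoot_exp q hq
  have hw : ‖((z ^ ((1 : ℝ) / q) : ℝ) : ℂ)‖ < 1 := by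
    rw [norm_real, Real.norm_of_nonneg (by positivity)]
    exact Real.rpow_lt_one hz0.le hz1 (by positivity)
  have hS := hζ.hasSum_ite_dvd_sub_neg_log hw p
  -- the `n = 0` term `q * w ^ 0 / 0` is the junk value `0`
  rw [hasSum_ite_intCast_dvd_sub_iff hq hpq (by simp)] at hS
  have hroot (k : ℕ) : exp (2 * Real.pi * I * k / q) = ζ ^ k := by
    rw [← exp_nat_mul]; ring_nf
  have hroot_inv (k : ℕ) : exp (-(2 * Real.pi * I * p * k) / q) = (ζ ^ k)⁻¹ ^ p := by
    rw [← exp_nat_mul, ← exp_neg, ← exp_nat_mul]; ring_nf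
  simp_rw [hroot, hroot_inv]
  set L := ∑ k ∈ range q, (ζ ^ k)⁻¹ ^ p * log (1 - ((z ^ ((1 : ℝ) / q) : ℝ) : ℂ) * ζ ^ k)
  have hsecond :
      ((∑' k : ℕ, z ^ ((k : ℝ) + (p : ℝ) / q) / ((k : ℝ) + (p : ℝ) / q) : ℝ) : ℂ) = -L := by
    rw [ofReal_tsum, ← hS.tsum_eq]
    refine tsum_congr fun m => ?_
    rw [Real.rpow_add_div_div_eq_mul_pow_div hz0.le hq]
    push_cast
    rfl
  refine ⟨?_, hsecond⟩
  have hshift (k : ℕ) : z ^ k / ((k : ℝ) + (p : ℝ) / q) =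
      z ^ (-((p : ℝ) / q)) * (z ^ ((k : ℝ) + (p : ℝ) / q) / ((k : ℝ) + (p : ℝ) / q)) := by
    rw [mul_div_assoc', ← Real.rpow_add hz0, neg_add_eq_sub, add_sub_cancel_right,
      Real.rpow_natCast]
  simp_rw [hshift]
  rw [tsum_mul_left, ofReal_mul, hsecond]
  have hpC : (p : ℂ) ≠ 0 := Nat.cast_ne_zero.mpr hp.ne'
  field_simp
end

section
/- For ν = n + p/q with n a nonnegative integer, p, q positive integers with p < q, and 0 < z < 1, B(ν,0,z) = -Σ_{k=0}^{q-1} exp(-2πipk/q) log(1 - z^(1/q) exp(2πik/q)) - Σ_{k=0}^{n-1} z^(k+p/q)/(k + p/q). -/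
/-!
Expanding `1/(1-t)` as a geometric series gives `B(ν,0,z) = ∑_{k ≥ 0} z^(k+ν)/(k+ν)`, and dropping
the first `n` terms reduces `ν = n + p/q` to `p/q`. With `w = z^(1/q)` that series is
`q ∑_k w^(qk+p)/(qk+p)`, the part of `-log(1-w) = ∑_m w^m/m` supported on `m ≡ p (mod q)`. The
roots-of-unity filter `∑_{j<q} ζ^(-pj) ζ^(mj) = q·[m ≡ p (mod q)]` extracts it from the `q` series
`-log(1 - w ζ^j)`.
-/

open Finset MeasureTheory Set Complex

theorem Real.hasSum_rpow_nat_add {t : ℝ} (ht0 : 0 < t) (ht1 : t < 1) (s : ℝ) :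
    HasSum (fun k : ℕ => t ^ ((k : ℝ) + s)) (t ^ s / (1 - t)) := by
  simpa only [Real.rpow_add ht0, Real.rpow_natCast, mul_comm, div_eq_mul_inv]
    using (hasSum_geometric_of_lt_one ht0.le ht1).mul_left (t ^ s)

theorem Real.summable_rpow_nat_add_div {z : ℝ} (hz0 : 0 < z) (hz1 : z < 1) {a : ℝ} (ha : 0 < a) :
    Summable (fun k : ℕ => z ^ ((k : ℝ) + a) / ((k : ℝ) + a)) := by
  refine Summable.of_nonneg_of_le (fun k => by positivity) (fun k => ?_)
    ((Real.hasSum_rpow_nat_add hz0 hz1 a).summable.div_const a)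
  gcongr
  exact le_add_of_nonneg_left k.cast_nonneg

theorem integral_Ioc_rpow_nat_add_sub_one {z : ℝ} (hz : 0 ≤ z) {ν : ℝ} (hν : 0 < ν) (k : ℕ) :
    ∫ t in Ioc 0 z, t ^ ((k : ℝ) + (ν - 1)) = z ^ ((k : ℝ) + ν) / ((k : ℝ) + ν) := by
  have hk : 0 < (k : ℝ) + ν := by positivity
  rw [← intervalIntegral.integral_of_le hz, integral_rpow (Or.inl (by linarith)),
    show (k : ℝ) + (ν - 1) + 1 = k + ν by ring, Real.zero_rpow hk.ne', sub_zero]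

theorem hasSum_integral_rpow_sub_one_div_one_sub {z : ℝ} (hz0 : 0 < z) (hz1 : z < 1)
    {ν : ℝ} (hν : 0 < ν) :
    HasSum (fun k : ℕ => z ^ ((k : ℝ) + ν) / ((k : ℝ) + ν))
      (∫ t in 0..z, t ^ (ν - 1) / (1 - t)) := by
  have hint (k : ℕ) : IntegrableOn (fun t : ℝ => t ^ ((k : ℝ) + (ν - 1))) (Ioc 0 z) :=
    (intervalIntegrable_iff_integrableOn_Ioc_of_le hz0.le).1
      (intervalIntegral.intervalIntegrable_rpow' (by linarith [k.cast_nonneg (α := ℝ)]))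
  have hnorm (k : ℕ) :
      ∫ t in Ioc 0 z, ‖t ^ ((k : ℝ) + (ν - 1))‖ = z ^ ((k : ℝ) + ν) / ((k : ℝ) + ν) := by
    rw [← integral_Ioc_rpow_nat_add_sub_one hz0.le hν]
    exact setIntegral_congr_fun measurableSet_Ioc fun t ht =>
      Real.norm_of_nonneg (Real.rpow_nonneg ht.1.le _)
  have hgeom : ∫ t in Ioc 0 z, t ^ (ν - 1) / (1 - t)
      = ∫ t in Ioc 0 z, ∑' k : ℕ, t ^ ((k : ℝ) + (ν - 1)) :=
    setIntegral_congr_fun measurableSet_Ioc fun t ht =>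
      (Real.hasSum_rpow_nat_add ht.1 (ht.2.trans_lt hz1) _).tsum_eq.symm
  rw [intervalIntegral.integral_of_le hz0.le, hgeom]
  simpa only [integral_Ioc_rpow_nat_add_sub_one hz0.le hν] using
    hasSum_integral_of_summable_integral_norm hint
      (by simpa only [hnorm] using Real.summable_rpow_nat_add_div hz0 hz1 hν)

theorem IsPrimitiveRoot.sum_range_pow_pow_eq_ite {R : Type*} [CommRing R] [IsDomain R] {ζ : R}
    {q : ℕ} (hζ : IsPrimitiveRoot ζ q) (m : ℕ) :
    ∑ j ∈ range q, (ζ ^ m) ^ j = if q ∣ m then (q : R) else 0 := by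
  split_ifs with hqm
  · simp [(hζ.pow_eq_one_iff_dvd m).2 hqm]
  · have hne : ζ ^ m - 1 ≠ 0 := sub_ne_zero.2 (mt (hζ.pow_eq_one_iff_dvd m).1 hqm)
    have hroot : (ζ ^ m) ^ q = 1 := by rw [← pow_mul, mul_comm, pow_mul, hζ.pow_eq_one, one_pow]
    simpa [hroot, hne] using geom_sum_mul (ζ ^ m) q

theorem Nat.dvd_add_sub_iff_modEq {p q m : ℕ} (hpq : p ≤ q) : q ∣ m + (q - p) ↔ m ≡ p [MOD q] := by
  rw [← Nat.modEq_zero_iff_dvd]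
  have hq : p + (q - p) ≡ 0 [MOD q] := by
    rw [Nat.add_sub_cancel' hpq]; exact Nat.modEq_zero_iff_dvd.2 dvd_rfl
  exact ⟨fun h => (h.trans hq.symm).add_right_cancel' _, fun h => (h.add_right _).trans hq⟩

theorem hasSum_mul_add_iff_hasSum_ite_modEq {α : Type*} [AddCommMonoid α] [TopologicalSpace α]
    {p q : ℕ} (hpq : p < q) (f : ℕ → α) (a : α) :
    HasSum (fun k => f (q * k + p)) a ↔ HasSum (fun m => if m ≡ p [MOD q] then f m else 0) a := by
  have hinj : Function.Injective (fun k : ℕ => q * k + p) := fun k l hkl =>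
    Nat.eq_of_mul_eq_mul_left (p.zero_le.trans_lt hpq) (Nat.add_right_cancel hkl)
  have hmodEq (k : ℕ) : q * k + p ≡ p [MOD q] := by simp [Nat.ModEq]
  rw [← hinj.hasSum_iff (f := fun m => if m ≡ p [MOD q] then f m else 0)]
  · simp only [Function.comp_def, hmodEq, if_true]
  · intro m hm
    rw [if_neg]
    rintro (h : m % q = p % q)
    refine hm ⟨m / q, ?_⟩
    change q * (m / q) + p = m
    rw [← Nat.mod_eq_of_lt hpq, ← h, Nat.div_add_mod]

-- `ζ ^ (q - p)` stands for `ζ⁻¹ ^ p`, keeping all exponents natural.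
theorem IsPrimitiveRoot.hasSum_neg_sum_pow_mul_log_one_sub {ζ : ℂ} {p q : ℕ}
    (hζ : IsPrimitiveRoot ζ q) (hpq : p < q) {x : ℂ} (hx : ‖x‖ < 1) :
    HasSum (fun k : ℕ => q * (x ^ (q * k + p) / (q * k + p : ℕ)))
      (-∑ j ∈ range q, ζ ^ ((q - p) * j) * log (1 - x * ζ ^ j)) := by
  have hq : q ≠ 0 := (p.zero_le.trans_lt hpq).ne'
  have hlog (j : ℕ) : HasSum (fun m : ℕ => ζ ^ ((q - p) * j) * ((x * ζ ^ j) ^ m / m))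
      (ζ ^ ((q - p) * j) * -log (1 - x * ζ ^ j)) := by
    refine (hasSum_taylorSeries_neg_log ?_).mul_left _
    rwa [norm_mul, norm_pow, hζ.norm'_eq_one hq, one_pow, mul_one]
  have hfilter (m : ℕ) : ∑ j ∈ range q, ζ ^ ((q - p) * j) * ((x * ζ ^ j) ^ m / m)
      = if m ≡ p [MOD q] then q * (x ^ m / m) else 0 := by
    calc ∑ j ∈ range q, ζ ^ ((q - p) * j) * ((x * ζ ^ j) ^ m / m)
        = x ^ m / m * ∑ j ∈ range q, (ζ ^ (m + (q - p))) ^ j := by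
          rw [mul_sum]; refine sum_congr rfl fun j _ => ?_; ring
      _ = _ := by
          simp only [hζ.sum_range_pow_pow_eq_ite, Nat.dvd_add_sub_iff_modEq hpq.le]
          split_ifs <;> ring
  rw [hasSum_mul_add_iff_hasSum_ite_modEq hpq (fun m : ℕ => q * (x ^ m / m))]
  simpa only [hfilter, mul_neg, sum_neg_distrib] using hasSum_sum (s := range q) fun j _ => hlog j

theorem Real.rpow_nat_add_div_eq_pow {z : ℝ} (hz : 0 ≤ z) {q : ℕ} (hq : q ≠ 0) (k p : ℕ) :
    z ^ ((k : ℝ) + p / q) = (z ^ ((1 : ℝ) / q)) ^ (q * k + p) := by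
  rw [← Real.rpow_natCast, ← Real.rpow_mul hz]
  congr 1
  push_cast
  field_simp

theorem hasSum_rpow_nat_add_div_neg_sum_exp_mul_log {p q : ℕ} (hpq : p < q) {z : ℝ}
    (hz0 : 0 ≤ z) (hz1 : z < 1) :
    HasSum (fun k : ℕ => ((z ^ ((k : ℝ) + p / q) / ((k : ℝ) + p / q) : ℝ) : ℂ))
      (-∑ k ∈ range q, exp (-(2 * Real.pi * I * p * k) / q) *
        log (1 - ((z ^ ((1 : ℝ) / q) : ℝ) : ℂ) * exp (2 * Real.pi * I * k / q))) := by
  have hq : q ≠ 0 := (p.zero_le.trans_lt hpq).ne'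
  set ζ := exp (2 * Real.pi * I / q)
  have hexp (k : ℕ) : exp (2 * Real.pi * I * k / q) = ζ ^ k := by
    rw [← exp_nat_mul]; ring_nf
  have hexp_neg (k : ℕ) : exp (-(2 * Real.pi * I * p * k) / q) = ζ ^ ((q - p) * k) := by
    rw [← exp_nat_mul, Nat.cast_mul, Nat.cast_sub hpq.le,
      show ((q : ℂ) - p) * k * (2 * Real.pi * I / q)
          = -(2 * Real.pi * I * p * k) / q + k * (2 * Real.pi * I) by field_simp; ring,
      exp_add, exp_nat_mul_two_pi_mul_I, mul_one]
  have hw : ‖((z ^ ((1 : ℝ) / q) : ℝ) : ℂ)‖ < 1 := by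
    rw [norm_real, Real.norm_of_nonneg (by positivity)]
    exact Real.rpow_lt_one hz0 hz1 (by positivity)
  simp only [hexp, hexp_neg]
  convert (isPrimitiveRoot_exp q hq).hasSum_neg_sum_pow_mul_log_one_sub hpq hw using 2 with k
  rw [Real.rpow_nat_add_div_eq_pow hz0 hq]
  push_cast
  field_simp

/-- For `ν = n + p/q` with `n` a nonnegative integer, `p < q` positive integers, and `0 < z < 1`,
`B(ν,0,z) = -∑_{k=0}^{q-1} e^{-2πipk/q} log(1 - z^{1/q} e^{2πik/q}) - ∑_{k=0}^{n-1} z^(k+p/q)/(k+p/q)`. -/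
theorem incompleteBeta_pos_rat_reduction (n : ℕ) (p q : ℕ) (hp : 0 < p) (hpq : p < q)
    (z : ℝ) (hz0 : 0 < z) (hz1 : z < 1) (ν : ℝ) (hν : ν = (n : ℝ) + (p : ℝ) / q) :
    ((∫ t in (0:ℝ)..z, t ^ (ν - 1) / (1 - t) : ℝ) : ℂ) =
      -(∑ k ∈ Finset.range q,
          Complex.exp (-(2 * Real.pi * Complex.I * p * k) / q) *
            Complex.log (1 - ((z ^ ((1 : ℝ) / q) : ℝ) : ℂ) *
              Complex.exp (2 * Real.pi * Complex.I * k / q))) -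
      ((∑ k ∈ Finset.range n, z ^ ((k : ℝ) + (p : ℝ) / q) / ((k : ℝ) + (p : ℝ) / q) : ℝ) : ℂ) := by
  subst hν
  have hν0 : 0 < (n : ℝ) + p / q := by have hq := hp.trans hpq; positivity
  set f : ℕ → ℝ := fun k => z ^ ((k : ℝ) + p / q) / ((k : ℝ) + p / q)
  set B := ∫ t in (0:ℝ)..z, t ^ ((n : ℝ) + p / q - 1) / (1 - t)
  have hB : HasSum (fun k => f (k + n)) B := by
    convert hasSum_integral_rpow_sub_one_div_one_sub hz0 hz1 hν0 using 2 with k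
    simp only [f, Nat.cast_add, add_assoc]
  have hf : HasSum f (B + ∑ k ∈ range n, f k) :=
    (hasSum_nat_add_iff' n).1 (by rwa [add_sub_cancel_right])
  rw [← (hasSum_ofReal.2 hf).unique
    (hasSum_rpow_nat_add_div_neg_sum_exp_mul_log hpq hz0.le hz1)]
  push_cast
  ring
end

section
/- For ν = -n + p/q with n a nonnegative integer, p, q positive integers with p < q, and 0 < z < 1, B(ν,0,z) = -Σ_{k=0}^{q-1} exp(-2πipk/q) log(1 - z^(1/q) exp(2πik/q)) + Σ_{k=1}^n z^(p/q - k)/(p/q - k). -/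
/-!
With `ν = -n + c`, `c = p/q`, the first `n` terms of the series are the finite sum, and the
tail is `∑ₘ z^(m+c)/(m+c) = ∑_{j ≡ p (mod q)} q w^j / j` with `w = z^(1/q)`.
Averaging `-log(1 - x) = ∑ x^j / j` at `x = w ζᵏ` over the `q`-th roots of unity `ζᵏ`, twisted
by `ζ^(-pk)`, extracts exactly the exponents `j ≡ p (mod q)`.
-/

open Complex Finset

theorem sum_range_exp_two_pi_I_mul_div (q : ℕ) (hq : q ≠ 0) (a : ℤ) :
    ∑ k ∈ range q, exp (2 * Real.pi * I * a * k / q) =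
      if (q : ℤ) ∣ a then (q : ℂ) else 0 := by
  set ζ := exp (2 * Real.pi * I / q)
  have hζ : IsPrimitiveRoot ζ q := Complex.isPrimitiveRoot_exp q hq
  have hpow (k : ℕ) : exp (2 * Real.pi * I * a * k / q) = (ζ ^ a) ^ k := by
    rw [← exp_int_mul, ← exp_nat_mul]
    ring_nf
  have hζq : (ζ ^ a) ^ q = 1 := by
    rw [← zpow_natCast, ← zpow_mul, mul_comm, zpow_mul, zpow_natCast, hζ.pow_eq_one, one_zpow]
  simp_rw [hpow]
  split_ifs with hdvd
  · simp [(hζ.zpow_eq_one_iff_dvd a).2 hdvd]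
  · rw [geom_sum_eq (mt (hζ.zpow_eq_one_iff_dvd a).1 hdvd), hζq, sub_self, zero_div]

theorem hasSum_ite_modEq_neg_log {w : ℂ} (hw : ‖w‖ < 1) {q : ℕ} (hq : q ≠ 0) (p : ℕ) :
    HasSum (fun j : ℕ => if p ≡ j [MOD q] then q * w ^ j / j else 0)
      (-∑ k ∈ range q, exp (-(2 * Real.pi * I * p * k) / q) *
        log (1 - w * exp (2 * Real.pi * I * k / q))) := by
  have hterm (k : ℕ) : HasSum
      (fun j : ℕ =>
        exp (-(2 * Real.pi * I * p * k) / q) * (w * exp (2 * Real.pi * I * k / q)) ^ j / j)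
      (exp (-(2 * Real.pi * I * p * k) / q) * -log (1 - w * exp (2 * Real.pi * I * k / q))) := by
    have hnorm : ‖w * exp (2 * Real.pi * I * k / q)‖ < 1 := by
      rwa [norm_mul, show 2 * Real.pi * I * k / q = ((2 * Real.pi * k / q : ℝ) : ℂ) * I by
        push_cast; ring, norm_exp_ofReal_mul_I, mul_one]
    simpa only [mul_div_assoc] using (hasSum_taylorSeries_neg_log hnorm).mul_left _
  convert hasSum_sum fun k (_ : k ∈ range q) => hterm k using 1
  · ext j
    have hcoeff (k : ℕ) :
        exp (-(2 * Real.pi * I * p * k) / q) * (w * exp (2 * Real.pi * I * k / q)) ^ j / j =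
          exp (2 * Real.pi * I * ((j - p : ℤ) : ℂ) * k / q) * (w ^ j / j) := by
      rw [mul_pow, ← exp_nat_mul, show ∀ x y : ℂ, x * (w ^ j * y) / j = x * y * (w ^ j / j) by
        intros; ring, ← exp_add]
      push_cast
      ring_nf
    simp_rw [hcoeff, ← sum_mul, sum_range_exp_two_pi_I_mul_div q hq, ← Nat.modEq_iff_dvd]
    split_ifs <;> ring
  · simp only [mul_neg, sum_neg_distrib]

theorem hasSum_ite_modEq_iff {M : Type*} [AddCommMonoid M] [TopologicalSpace M] {f : ℕ → M}
    {p q : ℕ} (hpq : p < q) {a : M} :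
    HasSum (fun j => if p ≡ j [MOD q] then f j else 0) a ↔
      HasSum (fun m => f (q * m + p)) a := by
  have hinj : Function.Injective fun m : ℕ => q * m + p := fun m m' h => by
    simpa [(Nat.zero_le p).trans_lt hpq |>.ne'] using h
  rw [← hinj.hasSum_iff]
  · congr! 1
    ext m
    simp [Nat.ModEq]
  · rintro j hj
    rw [if_neg]
    intro hpj
    refine hj ⟨j / q, ?_⟩
    have : j % q = p := by rw [← hpj, Nat.mod_eq_of_lt hpq]
    simpa [this] using Nat.div_add_mod j q

theorem mul_rpow_one_div_pow_div (z : ℝ) (hz : 0 ≤ z) {q : ℕ} (hq : q ≠ 0) (m p : ℕ) :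
    q * (z ^ ((1 : ℝ) / q)) ^ (q * m + p) / (q * m + p : ℕ) =
      z ^ ((m : ℝ) + p / q) / ((m : ℝ) + p / q) := by
  have hq' : (q : ℝ) ≠ 0 := Nat.cast_ne_zero.2 hq
  have hexp : ((q * m + p : ℕ) : ℝ) = q * ((m : ℝ) + p / q) := by
    push_cast
    field_simp
  rw [← Real.rpow_natCast, ← Real.rpow_mul hz, hexp, ← mul_assoc, one_div_mul_cancel hq',
    one_mul, mul_div_mul_left _ _ hq']

theorem tsum_shift_eq_sum_Icc_add_tsum {E : Type*} [AddCommGroup E] [TopologicalSpace E]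
    [IsTopologicalAddGroup E] [T2Space E] (φ : ℝ → E) (c : ℝ) (n : ℕ)
    (hφ : Summable fun m : ℕ => φ (m + c)) :
    ∑' k : ℕ, φ (k + (-n + c)) = ∑ k ∈ Icc 1 n, φ (c - k) + ∑' m : ℕ, φ (m + c) := by
  have hshift (m : ℕ) : φ ((m + n : ℕ) + (-n + c)) = φ (m + c) := by
    push_cast
    ring_nf
  have hsum : Summable fun k : ℕ => φ (k + (-n + c)) :=
    (summable_nat_add_iff n).1 (by simpa only [hshift] using hφ)
  rw [← hsum.sum_add_tsum_nat_add n]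
  simp only [hshift]
  congr 1
  refine sum_nbij' (n - ·) (n - ·) ?_ ?_ ?_ ?_ fun i hi => ?_
  all_goals try (intro i hi; simp only [mem_range, mem_Icc] at hi ⊢; omega)
  rw [Nat.cast_sub (mem_range.1 hi).le]
  ring_nf

theorem incompleteBeta_neg_rat_reduction_general (n : ℕ) (p q : ℕ) (hpq : p < q)
    (z : ℝ) (hz0 : 0 < z) (hz1 : z < 1) (ν : ℝ) (hν : ν = -(n : ℝ) + (p : ℝ) / q) :
    ((∑' k : ℕ, z ^ ((k : ℝ) + ν) / ((k : ℝ) + ν) : ℝ) : ℂ) =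
      -(∑ k ∈ Finset.range q,
          Complex.exp (-(2 * Real.pi * Complex.I * p * k) / q) *
            Complex.log (1 - ((z ^ ((1 : ℝ) / q) : ℝ) : ℂ) *
              Complex.exp (2 * Real.pi * Complex.I * k / q))) +
      ((∑ k ∈ Finset.Icc 1 n, z ^ ((p : ℝ) / q - k) / ((p : ℝ) / q - (k : ℝ)) : ℝ) : ℂ) := by
  have hq : q ≠ 0 := by omega
  have hw : ‖((z ^ ((1 : ℝ) / q) : ℝ) : ℂ)‖ < 1 := by
    rw [norm_real, Real.norm_of_nonneg (by positivity)]
    exact Real.rpow_lt_one hz0.le hz1 (by positivity)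
  have hseries := (hasSum_ite_modEq_iff hpq).1 (hasSum_ite_modEq_neg_log hw hq p)
  simp_rw [← ofReal_pow, ← ofReal_natCast, ← ofReal_mul, ← ofReal_div,
    mul_rpow_one_div_pow_div z hz0.le hq, ofReal_natCast] at hseries
  subst hν
  rw [tsum_shift_eq_sum_Icc_add_tsum (fun t => z ^ t / t) _ n
    (summable_ofReal.1 hseries.summable), ofReal_add, ofReal_tsum, hseries.tsum_eq, add_comm]

/-- For `ν = -n + p/q` with `n` a nonnegative integer, `p < q` positive integers, and `0 < z < 1`,
with `B(ν,0,z)` defined by the series `∑_{k≥0} z^(k+ν)/(k+ν)`,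
`B(ν,0,z) = -∑_{k=0}^{q-1} e^{-2πipk/q} log(1 - z^{1/q} e^{2πik/q}) + ∑_{k=1}^n z^(p/q-k)/(p/q-k)`. -/
theorem incompleteBeta_neg_rat_reduction (n : ℕ) (p q : ℕ) (hp : 0 < p) (hpq : p < q)
    (z : ℝ) (hz0 : 0 < z) (hz1 : z < 1) (ν : ℝ) (hν : ν = -(n : ℝ) + (p : ℝ) / q) :
    ((∑' k : ℕ, z ^ ((k : ℝ) + ν) / ((k : ℝ) + ν) : ℝ) : ℂ) =
      -(∑ k ∈ Finset.range q,
          Complex.exp (-(2 * Real.pi * Complex.I * p * k) / q) *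
            Complex.log (1 - ((z ^ ((1 : ℝ) / q) : ℝ) : ℂ) *
              Complex.exp (2 * Real.pi * Complex.I * k / q))) +
      ((∑ k ∈ Finset.Icc 1 n, z ^ ((p : ℝ) / q - k) / ((p : ℝ) / q - (k : ℝ)) : ℝ) : ℂ) :=
  incompleteBeta_neg_rat_reduction_general n p q hpq z hz0 hz1 ν hν
end

section
/- For λ = n + p/q with n a nonnegative integer, p, q positive integers with p < q, and real z > 0, ∫₀^z tanh(t)^(2λ-1) dt = -(1/2) Σ_{k=0}^{q-1} exp(-2πipk/q) log(1 - (tanh z)^(2/q) exp(2πik/q)) - (1/2) Σ_{k=0}^{n-1} (tanh z)^(2(k+p/q))/(k + p/q). -/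
/-!
Substituting `T = tanh t` (so `dt = dT / (1 - T²)`) turns the integral into
`∫₀^{tanh z} T^(2λ-1) / (1 - T²) dT`, so it suffices to differentiate the right-hand side
in `T`.
With `s = T^(2/q)` and `ζ = e^{2πi/q}`, the logarithmic sum has derivative governed by the
roots-of-unity filter `∑_k ζ^{-(p-1)k} / (1 - s ζ^k) = q s^(p-1) / (1 - s^q)`, which yields
`T^(2p/q-1) / (1 - T²)`; the finite sum contributes `-T^(2p/q-1) (1 - T^(2n)) / (1 - T²)`.
Together they give `T^(2λ-1) / (1 - T²)`, and both sides vanish at `z = 0`.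
-/

open Finset Real

namespace Real

theorem hasDerivAt_tanh (x : ℝ) : HasDerivAt tanh (1 - tanh x ^ 2) x := by
  rw [show tanh = fun y => sinh y / cosh y from funext tanh_eq_sinh_div_cosh]
  refine ((hasDerivAt_sinh x).div (hasDerivAt_cosh x) (cosh_pos x).ne').congr_deriv ?_
  field_simp

theorem continuous_tanh : Continuous tanh :=
  continuous_iff_continuousAt.2 fun x => (hasDerivAt_tanh x).continuousAt

theorem tanh_pos {x : ℝ} (hx : 0 < x) : 0 < tanh x := by
  rw [tanh_eq_sinh_div_cosh]
  exact div_pos (sinh_pos_iff.2 hx) (cosh_pos x)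

theorem tanh_nonneg {x : ℝ} (hx : 0 ≤ x) : 0 ≤ tanh x := by
  rw [tanh_eq_sinh_div_cosh]
  exact div_nonneg (sinh_nonneg_iff.2 hx) (cosh_pos x).le

end Real

namespace IsPrimitiveRoot

variable {K : Type*} [Field K] {ζ : K} {q : ℕ}

theorem geom_sum_pow_eq (hζ : IsPrimitiveRoot ζ q) (j : ℕ) :
    ∑ k ∈ range q, (ζ ^ j) ^ k = if q ∣ j then (q : K) else 0 := by
  split_ifs with hj
  · simp [(hζ.pow_eq_one_iff_dvd j).2 hj]
  · rw [geom_sum_eq (mt (hζ.pow_eq_one_iff_dvd j).1 hj), ← pow_mul, mul_comm, pow_mul,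
      hζ.pow_eq_one, one_pow, sub_self, zero_div]

theorem sum_pow_div_one_sub_mul_pow (hζ : IsPrimitiveRoot ζ q) {m : ℕ} (hm : m < q)
    {s : K} (hs : s ^ q ≠ 1) :
    ∑ k ∈ range q, ζ ^ ((q - m) * k) / (1 - s * ζ ^ k) = q * s ^ m / (1 - s ^ q) := by
  have hsq : 1 - s ^ q ≠ 0 := sub_ne_zero.2 hs.symm
  have hgeom (k : ℕ) :
      1 / (1 - s * ζ ^ k) = (∑ j ∈ range q, s ^ j * (ζ ^ k) ^ j) / (1 - s ^ q) := by
    have hpow : (s * ζ ^ k) ^ q = s ^ q := by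
      rw [mul_pow, ← pow_mul, mul_comm k, pow_mul, hζ.pow_eq_one, one_pow, mul_one]
    have hne : 1 - s * ζ ^ k ≠ 0 := fun h => hs (by rw [← hpow, ← sub_eq_zero.1 h, one_pow])
    rw [div_eq_div_iff hne hsq, one_mul, ← hpow, ← mul_neg_geom_sum]
    simp [mul_pow, mul_comm]
  have hdvd {j : ℕ} (hj : j < q) : q ∣ q - m + j ↔ j = m := by
    constructor
    · rintro ⟨c, hc⟩
      have : q - m + j < q * 2 := by omega
      rcases c with _ | _ | c <;> [omega; omega; nlinarith]
    · rintro rfl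
      exact ⟨1, by omega⟩
  calc ∑ k ∈ range q, ζ ^ ((q - m) * k) / (1 - s * ζ ^ k)
      = (∑ j ∈ range q, s ^ j * ∑ k ∈ range q, (ζ ^ (q - m + j)) ^ k) / (1 - s ^ q) := by
        simp_rw [div_eq_mul_one_div (ζ ^ _), hgeom, ← mul_div_assoc, ← sum_div, mul_sum]
        rw [sum_comm]
        refine congrArg (· / _) (sum_congr rfl fun j _ => sum_congr rfl fun k _ => ?_)
        ring
    _ = q * s ^ m / (1 - s ^ q) := by
        simp_rw [hζ.geom_sum_pow_eq, mul_ite, mul_zero]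
        rw [sum_congr rfl fun j hj => if_congr (hdvd (mem_range.1 hj)) rfl rfl,
          sum_ite_eq' (range q), if_pos (mem_range.2 hm), mul_comm]

end IsPrimitiveRoot

section LogResolvent

open Complex

theorem Complex.exp_two_pi_I_mul_div (q k : ℕ) :
    exp (2 * π * I * k / q) = exp (2 * π * I / q) ^ k := by
  rw [← exp_nat_mul]
  ring_nf

theorem Complex.exp_neg_two_pi_I_mul_div_mul_exp (q p k : ℕ) (hp : 0 < p) (hpq : p ≤ q) :
    exp (-(2 * π * I * p * k) / q) * exp (2 * π * I * k / q) =
      exp (2 * π * I / q) ^ ((q - (p - 1)) * k) := by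
  have hq : (q : ℂ) ≠ 0 := Nat.cast_ne_zero.2 (by omega)
  rw [← exp_add, ← exp_nat_mul, ← mul_one (exp (_ + _)), ← exp_nat_mul_two_pi_mul_I k,
    ← exp_add]
  congr 1
  push_cast [Nat.cast_sub (by omega : p - 1 ≤ q), Nat.cast_sub hp]
  field_simp
  ring

/-- `∑_k ζ^{-pk} log(1 - s ζ^k)` over the `q`-th roots of unity `ζ^k`, `ζ = e^{2πi/q}`. -/
noncomputable def logResolvent (p q : ℕ) (s : ℂ) : ℂ :=
  ∑ k ∈ range q, exp (-(2 * π * I * p * k) / q) * log (1 - s * exp (2 * π * I * k / q))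

theorem logResolvent_zero (p q : ℕ) : logResolvent p q 0 = 0 := by
  simp [logResolvent]

theorem hasDerivAt_logResolvent {p q : ℕ} (hp : 0 < p) (hpq : p ≤ q) {s : ℂ}
    (hs : ‖s‖ < 1) :
    HasDerivAt (logResolvent p q) (-(q * s ^ (p - 1) / (1 - s ^ q))) s := by
  set ζ := exp (2 * π * I / q)
  have hζ : IsPrimitiveRoot ζ q := isPrimitiveRoot_exp q (by omega)
  have hs_pow : s ^ q ≠ 1 := fun h => by
    have : ‖s‖ ^ q < 1 := pow_lt_one₀ (norm_nonneg s) hs (by omega)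
    simp [← norm_pow, h] at this
  have hterm (k : ℕ) :
      HasDerivAt (fun s => log (1 - s * ζ ^ k)) (-ζ ^ k / (1 - s * ζ ^ k)) s := by
    have hmem : 1 - s * ζ ^ k ∈ slitPlane := by
      rw [sub_eq_add_neg]
      refine mem_slitPlane_of_norm_lt_one ?_
      rwa [norm_neg, norm_mul, norm_pow, hζ.norm'_eq_one (by omega), one_pow, mul_one]
    exact (((hasDerivAt_id s).mul_const _).const_sub 1).clog hmem |>.congr_deriv (by simp)
  unfold logResolvent
  simp_rw [exp_two_pi_I_mul_div q]
  refine (HasDerivAt.fun_sum fun k _ =>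
    (hterm k).const_mul (exp (-(2 * π * I * p * k) / q))).congr_deriv ?_
  rw [← hζ.sum_pow_div_one_sub_mul_pow (by omega : p - 1 < q) hs_pow, ← sum_neg_distrib]
  refine sum_congr rfl fun k _ => ?_
  rw [← exp_two_pi_I_mul_div, ← exp_neg_two_pi_I_mul_div_mul_exp q p k hp hpq,
    exp_two_pi_I_mul_div]
  ring

end LogResolvent

theorem hasDerivAt_logResolvent_rpow {p q : ℕ} (hp : 0 < p) (hpq : p ≤ q) {T : ℝ}
    (hT0 : 0 < T) (hT1 : T < 1) :
    HasDerivAt (fun T : ℝ => logResolvent p q (T ^ ((2 : ℝ) / q) : ℝ))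
      ((-2 * T ^ (2 * ((p : ℝ) / q) - 1) / (1 - T ^ 2) : ℝ) : ℂ) T := by
  have hq : (q : ℝ) ≠ 0 := Nat.cast_ne_zero.2 (by omega)
  have hqC : (q : ℂ) ≠ 0 := Nat.cast_ne_zero.2 (by omega)
  set s := T ^ ((2 : ℝ) / q)
  have hs : ‖(s : ℂ)‖ < 1 := by
    rw [Complex.norm_real, Real.norm_of_nonneg (by positivity)]
    exact Real.rpow_lt_one hT0.le hT1 (by positivity)
  have hs_pow : s ^ q = T ^ 2 := by
    rw [← Real.rpow_natCast, ← Real.rpow_mul hT0.le, div_mul_cancel₀ _ hq, Real.rpow_two]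
  have hs_pow' : T ^ ((2 : ℝ) / q - 1) * s ^ (p - 1) = T ^ (2 * ((p : ℝ) / q) - 1) := by
    rw [← Real.rpow_natCast, ← Real.rpow_mul hT0.le, ← Real.rpow_add hT0, Nat.cast_sub hp]
    congr 1
    field_simp
    ring
  have hrpow :
      HasDerivAt (fun T : ℝ => T ^ ((2 : ℝ) / q)) (2 / q * T ^ ((2 : ℝ) / q - 1)) T :=
    Real.hasDerivAt_rpow_const (Or.inl hT0.ne')
  refine (((hasDerivAt_logResolvent hp hpq hs).comp_ofReal).scomp T hrpow).congr_deriv ?_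
  rw [← Complex.ofReal_pow, ← Complex.ofReal_pow, hs_pow, Complex.real_smul, ← hs_pow']
  push_cast
  field_simp

noncomputable def fracPowerSum (n : ℕ) (a T : ℝ) : ℝ :=
  ∑ k ∈ range n, T ^ (2 * ((k : ℝ) + a)) / ((k : ℝ) + a)

theorem fracPowerSum_zero (n : ℕ) {a : ℝ} (ha : 0 < a) : fracPowerSum n a 0 = 0 :=
  sum_eq_zero fun k _ => by rw [Real.zero_rpow (by positivity), zero_div]

theorem continuous_fracPowerSum (n : ℕ) {a : ℝ} (ha : 0 ≤ a) :
    Continuous (fracPowerSum n a) :=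
  continuous_finsetSum _ fun _ _ => (Real.continuous_rpow_const (by positivity)).div_const _

theorem hasDerivAt_fracPowerSum (n : ℕ) {a T : ℝ} (ha : 0 < a) (hT0 : 0 < T)
    (hT1 : T ^ 2 ≠ 1) :
    HasDerivAt (fracPowerSum n a) (2 * T ^ (2 * a - 1) * (1 - (T ^ 2) ^ n) / (1 - T ^ 2)) T := by
  have hterm (k : ℕ) : HasDerivAt (fun T : ℝ => T ^ (2 * ((k : ℝ) + a)) / ((k : ℝ) + a))
      (2 * T ^ (2 * a - 1) * (T ^ 2) ^ k) T := by
    refine ((Real.hasDerivAt_rpow_const (Or.inl hT0.ne')).div_const _).congr_deriv ?_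
    rw [← pow_mul, ← Real.rpow_natCast, mul_div_right_comm,
      mul_div_cancel_right₀ _ (by positivity), mul_assoc, ← Real.rpow_add hT0]
    push_cast
    ring_nf
  refine (HasDerivAt.fun_sum fun k _ => hterm k).congr_deriv ?_
  rw [← mul_sum, geom_sum_eq hT1, mul_div_assoc, ← neg_div_neg_eq, neg_sub, neg_sub]

/-- In the variable `T = tanh t`, a primitive of `T ^ (2λ - 1) / (1 - T ^ 2)`, `λ = n + p/q`. -/
noncomputable def tanhPrimitive (n p q : ℕ) (T : ℝ) : ℂ :=
  -(1 / 2) * logResolvent p q (T ^ ((2 : ℝ) / q) : ℝ) -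
    (1 / 2) * (fracPowerSum n (p / q) T : ℂ)

theorem tanhPrimitive_zero (n : ℕ) {p q : ℕ} (hp : 0 < p) (hq : 0 < q) :
    tanhPrimitive n p q 0 = 0 := by
  have hq' : (0 : ℝ) < q := Nat.cast_pos.2 hq
  rw [tanhPrimitive, Real.zero_rpow (div_pos two_pos hq').ne',
    fracPowerSum_zero n (div_pos (Nat.cast_pos.2 hp) hq')]
  simp [logResolvent_zero]

theorem continuousAt_tanhPrimitive (n : ℕ) {p q : ℕ} (hp : 0 < p) (hpq : p ≤ q) {T : ℝ}
    (hT0 : 0 ≤ T) (hT1 : T < 1) : ContinuousAt (tanhPrimitive n p q) T := by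
  have hq : (0 : ℝ) < q := Nat.cast_pos.2 (by omega)
  have hs : ‖((T ^ ((2 : ℝ) / q) : ℝ) : ℂ)‖ < 1 := by
    rw [Complex.norm_real, Real.norm_of_nonneg (by positivity)]
    exact Real.rpow_lt_one hT0 hT1 (by positivity)
  have hrpow : ContinuousAt (fun T : ℝ => ((T ^ ((2 : ℝ) / q) : ℝ) : ℂ)) T :=
    Complex.continuous_ofReal.continuousAt.comp
      (Real.continuousAt_rpow_const T ((2 : ℝ) / q) (Or.inr (by positivity)))
  have hlog := ContinuousAt.comp (x := T) (hasDerivAt_logResolvent hp hpq hs).continuousAt hrpow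
  exact (hlog.const_mul _).sub ((Complex.continuous_ofReal.comp
    (continuous_fracPowerSum n (by positivity))).continuousAt.const_mul _)

theorem hasDerivAt_tanhPrimitive (n : ℕ) {p q : ℕ} (hp : 0 < p) (hpq : p ≤ q) {T : ℝ}
    (hT0 : 0 < T) (hT1 : T < 1) :
    HasDerivAt (tanhPrimitive n p q)
      ((T ^ (2 * ((n : ℝ) + p / q) - 1) / (1 - T ^ 2) : ℝ) : ℂ) T := by
  have hq : (0 : ℝ) < q := Nat.cast_pos.2 (by omega)
  have hT2 : T ^ 2 < 1 := by nlinarith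
  have hpow : T ^ (2 * ((p : ℝ) / q) - 1) * (T ^ 2) ^ n = T ^ (2 * ((n : ℝ) + p / q) - 1) := by
    rw [← pow_mul, ← Real.rpow_natCast, ← Real.rpow_add hT0]
    push_cast
    ring_nf
  refine (((hasDerivAt_logResolvent_rpow hp hpq hT0 hT1).const_mul _).sub
    ((hasDerivAt_fracPowerSum n (by positivity) hT0 hT2.ne).ofReal_comp.const_mul _)).congr_deriv ?_
  rw [← hpow]
  have : (1 : ℂ) - (T : ℂ) ^ 2 ≠ 0 := by exact_mod_cast (sub_pos.2 hT2).ne'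
  push_cast
  field_simp
  ring

theorem hasDerivAt_tanhPrimitive_comp_tanh (n : ℕ) {p q : ℕ} (hp : 0 < p) (hpq : p ≤ q)
    {x : ℝ} (hx : 0 < x) :
    HasDerivAt (fun y => tanhPrimitive n p q (tanh y))
      ((tanh x ^ (2 * ((n : ℝ) + p / q) - 1) : ℝ) : ℂ) x := by
  refine ((hasDerivAt_tanhPrimitive n hp hpq (tanh_pos hx) (tanh_lt_one x)).scomp x
    (hasDerivAt_tanh x)).congr_deriv ?_
  rw [Complex.real_smul, ← Complex.ofReal_mul,
    mul_div_cancel₀ _ (sub_pos.2 (tanh_sq_lt_one x)).ne']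

/-- Integrability of `f` is automatic: `re ∘ F` is a primitive of `f ≥ 0`. -/
theorem integral_ofReal_eq_sub_of_hasDerivAt_of_nonneg {F : ℝ → ℂ} {f : ℝ → ℝ}
    {a b : ℝ} (hab : a ≤ b) (hcont : ContinuousOn F (Set.Icc a b))
    (hderiv : ∀ x ∈ Set.Ioo a b, HasDerivAt F (f x) x) (hf : ∀ x ∈ Set.Ioo a b, 0 ≤ f x) :
    ((∫ x in a..b, f x : ℝ) : ℂ) = F b - F a := by
  have hint : IntervalIntegrable f MeasureTheory.volume a b := by
    refine intervalIntegral.intervalIntegrable_deriv_of_nonneg (g := fun x => (F x).re) ?_ ?_ ?_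
    · rw [Set.uIcc_of_le hab]
      exact Complex.continuous_re.comp_continuousOn hcont
    · rw [min_eq_left hab, max_eq_right hab]
      exact fun x hx => Complex.reCLM.hasFDerivAt.comp_hasDerivAt x (hderiv x hx)
    · rwa [min_eq_left hab, max_eq_right hab]
  rw [← intervalIntegral.integral_ofReal]
  exact intervalIntegral.integral_eq_sub_of_hasDerivAt_of_le hab hcont hderiv
    ⟨hint.1.ofReal, hint.2.ofReal⟩

/-- For `λ = n + p/q` with `n` a nonnegative integer, `p < q` positive integers, and real `z > 0`,
`∫₀^z tanh(t)^(2λ-1) dt = -(1/2) ∑_{k=0}^{q-1} e^{-2πipk/q} log(1 - (tanh z)^{2/q} e^{2πik/q})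
  - (1/2) ∑_{k=0}^{n-1} (tanh z)^(2(k+p/q))/(k+p/q)`. -/
theorem integral_tanh_rpow_reduction (n : ℕ) (p q : ℕ) (hp : 0 < p) (hpq : p < q)
    (z : ℝ) (hz : 0 < z) (l : ℝ) (hl : l = (n : ℝ) + (p : ℝ) / q) :
    ((∫ t in (0:ℝ)..z, Real.tanh t ^ (2 * l - 1) : ℝ) : ℂ) =
      -(1/2) * (∑ k ∈ Finset.range q,
          Complex.exp (-(2 * Real.pi * Complex.I * p * k) / q) *
            Complex.log (1 - ((Real.tanh z ^ ((2 : ℝ) / q) : ℝ) : ℂ) *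
              Complex.exp (2 * Real.pi * Complex.I * k / q))) -
      (1/2) * ((∑ k ∈ Finset.range n,
          Real.tanh z ^ (2 * ((k : ℝ) + (p : ℝ) / q)) / ((k : ℝ) + (p : ℝ) / q) : ℝ) : ℂ) := by
  subst hl
  have hcont : ContinuousOn (fun y => tanhPrimitive n p q (tanh y)) (Set.Icc 0 z) :=
    fun y hy => ((continuousAt_tanhPrimitive n hp hpq.le (tanh_nonneg hy.1)
      (tanh_lt_one y)).comp continuous_tanh.continuousAt).continuousWithinAt
  rw [integral_ofReal_eq_sub_of_hasDerivAt_of_nonneg hz.le hcont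
    (fun x hx => hasDerivAt_tanhPrimitive_comp_tanh n hp hpq.le hx.1)
    (fun x hx => rpow_nonneg (tanh_nonneg hx.1.le) _),
    tanh_zero, tanhPrimitive_zero n hp (hp.trans hpq), sub_zero]
  rfl
end

section
/- For ν = n + p/q with n a nonnegative integer, p, q positive integers with p < q, and 0 < z < 1, ∫₀^1 t^(ν-1)/(1 - z t) dt = -z^(-n-p/q) Σ_{k=0}^{q-1} exp(-2πipk/q) log(1 - z^(1/q) exp(2πik/q)) - Σ_{k=0}^{n-1} z^(k-n)/(k + p/q). -/
/-!
Expanding `1 / (1 - z t)` geometrically and integrating termwise gives `∑_{j ≥ 0} z^j / (ν + j)`.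
On the other side `-log (1 - x) = ∑ x^j / j`, and averaging over `x = w ζ^k` for the `q`-th roots
of unity `ζ^k` with weights `ζ^(-pk)` keeps exactly the terms with `j ≡ p (mod q)`. For
`w = z^(1/q)` these are `q z^(m + p/q) / (q m + p)`; multiplying by `z^(-n-p/q)` and dropping the
first `n` of them leaves the series of the integral.
-/

open Complex Finset MeasureTheory intervalIntegral

namespace IsPrimitiveRoot

variable {K : Type*} [Field K] {ζ : K} {q : ℕ}

theorem geom_sum_zpow_eq_ite (hζ : IsPrimitiveRoot ζ q) (a : ℤ) :
    ∑ k ∈ range q, (ζ ^ a) ^ k = if (q : ℤ) ∣ a then (q : K) else 0 := by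
  split_ifs with h
  · simp [(hζ.zpow_eq_one_iff_dvd a).2 h]
  · have hpow : (ζ ^ a) ^ q = 1 := by
      rw [← zpow_natCast, ← zpow_mul, mul_comm, zpow_mul, hζ.zpow_eq_one, one_zpow]
    rw [geom_sum_eq (mt (hζ.zpow_eq_one_iff_dvd a).1 h), hpow, sub_self, zero_div]

theorem zpow_neg_mul_pow_eq (hζ : IsPrimitiveRoot ζ q) (hq : q ≠ 0) (p j k : ℕ) :
    (ζ ^ k) ^ (-(p : ℤ)) * (ζ ^ k) ^ j = (ζ ^ ((j : ℤ) - p)) ^ k := by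
  have hζ0 : ζ ^ k ≠ 0 := pow_ne_zero _ (hζ.ne_zero hq)
  rw [← zpow_natCast (ζ ^ k) j, ← zpow_add₀ hζ0, ← zpow_natCast, ← zpow_mul, ← zpow_natCast,
    ← zpow_mul]
  ring_nf

variable [TopologicalSpace K] [IsTopologicalRing K]

theorem hasSum_mul_add_of_hasSum (hζ : IsPrimitiveRoot ζ q) {p : ℕ} (hpq : p < q)
    {c : ℕ → K} {w : K} {S : ℕ → K} (hS : ∀ k < q, HasSum (fun j ↦ c j * (w * ζ ^ k) ^ j) (S k)) :
    HasSum (fun m ↦ q * (c (q * m + p) * w ^ (q * m + p)))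
      (∑ k ∈ range q, (ζ ^ k) ^ (-(p : ℤ)) * S k) := by
  have hq : q ≠ 0 := by omega
  have hsum := hasSum_sum fun k hk ↦ (hS k (mem_range.1 hk)).mul_left ((ζ ^ k) ^ (-(p : ℤ)))
  have hfilter (j : ℕ) : ∑ k ∈ range q, (ζ ^ k) ^ (-(p : ℤ)) * (c j * (w * ζ ^ k) ^ j) =
      if (q : ℤ) ∣ (j : ℤ) - p then q * (c j * w ^ j) else 0 := by
    have hk (k : ℕ) : (ζ ^ k) ^ (-(p : ℤ)) * (c j * (w * ζ ^ k) ^ j) =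
        c j * w ^ j * (ζ ^ ((j : ℤ) - p)) ^ k := by
      rw [← hζ.zpow_neg_mul_pow_eq hq]; ring
    rw [sum_congr rfl fun k _ ↦ hk k, ← mul_sum, hζ.geom_sum_zpow_eq_ite]
    split_ifs <;> ring
  simp only [hfilter] at hsum
  have hinj : Function.Injective fun m ↦ q * m + p := fun a b hab ↦ by
    simpa [hq] using hab
  refine ((hinj.hasSum_iff fun j hj ↦ if_neg fun hdvd ↦ hj ⟨j / q, ?_⟩).2 hsum).congr_fun
    fun m ↦ ?_
  · have hmod : j % q = p := Eq.trans (Nat.modEq_iff_dvd.2 hdvd).symm (Nat.mod_eq_of_lt hpq)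
    simp only [← hmod, Nat.div_add_mod]
  · simp

end IsPrimitiveRoot

namespace Complex

theorem exp_two_pi_I_mul_div_eq_pow (q k : ℕ) :
    exp (2 * Real.pi * I * k / q) = exp (2 * Real.pi * I / q) ^ k := by
  rw [← exp_nat_mul]; ring_nf

theorem exp_neg_two_pi_I_mul_mul_div_eq_zpow (p q k : ℕ) :
    exp (-(2 * Real.pi * I * p * k) / q) = (exp (2 * Real.pi * I / q) ^ k) ^ (-(p : ℤ)) := by
  rw [← exp_nat_mul, ← exp_int_mul]; push_cast; ring_nf

theorem hasSum_neg_sum_exp_mul_log {p q : ℕ} (hpq : p < q) {w : ℂ} (hw : ‖w‖ < 1) :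
    HasSum (fun m : ℕ ↦ q * (((q * m + p : ℕ) : ℂ)⁻¹ * w ^ (q * m + p)))
      (-∑ k ∈ range q,
        exp (-(2 * Real.pi * I * p * k) / q) * log (1 - w * exp (2 * Real.pi * I * k / q))) := by
  have hζ := isPrimitiveRoot_exp q (by omega)
  have hS (k : ℕ) (_ : k < q) :
      HasSum (fun j : ℕ ↦ (j : ℂ)⁻¹ * (w * exp (2 * Real.pi * I / q) ^ k) ^ j)
        (-log (1 - w * exp (2 * Real.pi * I / q) ^ k)) := by
    refine (hasSum_taylorSeries_neg_log ?_).congr_fun fun j ↦ by ring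
    rwa [norm_mul, norm_pow, hζ.norm'_eq_one (by omega), one_pow, mul_one]
  simpa only [exp_two_pi_I_mul_div_eq_pow, exp_neg_two_pi_I_mul_mul_div_eq_zpow, mul_neg,
    sum_neg_distrib] using hζ.hasSum_mul_add_of_hasSum hpq hS

end Complex

theorem integral_mul_rpow_add_nat (ν z : ℝ) (hν : 0 < ν) (j : ℕ) :
    ∫ t in (0 : ℝ)..1, z ^ j * t ^ (ν - 1 + j) = z ^ j / (ν + j) := by
  rw [intervalIntegral.integral_const_mul,
    integral_rpow (Or.inl (by linarith [(j.cast_nonneg : (0 : ℝ) ≤ j)])), add_right_comm,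
    sub_add_cancel, Real.one_rpow, Real.zero_rpow (by positivity), sub_zero, mul_one_div]

theorem hasSum_mul_rpow_add_nat (ν z : ℝ) {t : ℝ} (ht : 0 < t) (hzt : ‖z * t‖ < 1) :
    HasSum (fun j : ℕ ↦ z ^ j * t ^ (ν - 1 + j)) (t ^ (ν - 1) / (1 - z * t)) := by
  refine ((hasSum_geometric_of_norm_lt_one hzt).mul_left (t ^ (ν - 1))).congr_fun fun j ↦ ?_
  rw [Real.rpow_add ht, Real.rpow_natCast, mul_pow]
  ring

theorem hasSum_integral_rpow_div_one_sub_mul {ν z : ℝ} (hν : 0 < ν) (hz : |z| < 1) :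
    HasSum (fun j : ℕ ↦ z ^ j / (ν + j)) (∫ t in (0 : ℝ)..1, t ^ (ν - 1) / (1 - z * t)) := by
  set F : ℕ → ℝ → ℝ := fun j t ↦ z ^ j * t ^ (ν - 1 + j)
  have hint (j : ℕ) : IntervalIntegrable (F j) volume 0 1 :=
    (intervalIntegrable_rpow' (by linarith [(j.cast_nonneg : (0 : ℝ) ≤ j)])).const_mul _
  have hnorm (j : ℕ) : ∫ t in Set.Ioc (0 : ℝ) 1, ‖F j t‖ = |z| ^ j / (ν + j) := by
    rw [← integral_mul_rpow_add_nat ν |z| hν j, integral_of_le zero_le_one]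
    refine setIntegral_congr_fun measurableSet_Ioc fun t ht ↦ ?_
    simp [F, abs_of_pos (Real.rpow_pos_of_pos ht.1 _)]
  have hsummable : Summable fun j : ℕ ↦ |z| ^ j / (ν + j) :=
    ((summable_geometric_of_lt_one (abs_nonneg z) hz).div_const ν).of_nonneg_of_le
      (fun j ↦ by positivity) fun j ↦ div_le_div_of_nonneg_left (by positivity) hν (by simp)
  have hsum := hasSum_integral_of_summable_integral_norm (fun j ↦ (hint j).1)
    (by simpa only [hnorm] using hsummable)
  have hterm (j : ℕ) : ∫ t in Set.Ioc (0 : ℝ) 1, F j t = z ^ j / (ν + j) := by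
    rw [← integral_mul_rpow_add_nat ν z hν j, integral_of_le zero_le_one]
  have hvalue : ∫ t in Set.Ioc (0 : ℝ) 1, ∑' j, F j t =
      ∫ t in (0 : ℝ)..1, t ^ (ν - 1) / (1 - z * t) := by
    rw [integral_of_le zero_le_one]
    refine setIntegral_congr_fun measurableSet_Ioc fun t ht ↦
      (hasSum_mul_rpow_add_nat ν z ht.1 ?_).tsum_eq
    rw [norm_mul, Real.norm_eq_abs, Real.norm_of_nonneg ht.1.le]
    exact mul_lt_one_of_nonneg_of_lt_one_left (abs_nonneg z) hz ht.2
  simpa only [hterm, hvalue] using hsum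

theorem rpow_one_div_pow_mul_add {z : ℝ} (hz : 0 ≤ z) {q : ℕ} (hq : q ≠ 0) (m p : ℕ) :
    (z ^ ((1 : ℝ) / q)) ^ (q * m + p) = z ^ ((m : ℝ) + p / q) := by
  rw [← Real.rpow_natCast, ← Real.rpow_mul hz]
  congr 1
  push_cast
  field_simp

/-- For `ν = n + p/q` with `n` a nonnegative integer, `p < q` positive integers, and `0 < z < 1`,
`∫₀¹ t^(ν-1)/(1-zt) dt = -z^(-n-p/q) ∑_{k=0}^{q-1} e^{-2πipk/q} log(1 - z^{1/q} e^{2πik/q})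
  - ∑_{k=0}^{n-1} z^(k-n)/(k+p/q)`. -/
theorem integral_rpow_div_reduction (n : ℕ) (p q : ℕ) (hp : 0 < p) (hpq : p < q)
    (z : ℝ) (hz0 : 0 < z) (hz1 : z < 1) (ν : ℝ) (hν : ν = (n : ℝ) + (p : ℝ) / q) :
    ((∫ t in (0:ℝ)..1, t ^ (ν - 1) / (1 - z * t) : ℝ) : ℂ) =
      -((z ^ (-(n : ℝ) - (p : ℝ) / q) : ℝ) : ℂ) * (∑ k ∈ Finset.range q,
          Complex.exp (-(2 * Real.pi * Complex.I * p * k) / q) *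
            Complex.log (1 - ((z ^ ((1 : ℝ) / q) : ℝ) : ℂ) *
              Complex.exp (2 * Real.pi * Complex.I * k / q))) -
      ((∑ k ∈ Finset.range n, z ^ ((k : ℝ) - (n : ℝ)) / ((k : ℝ) + (p : ℝ) / q) : ℝ) : ℂ) := by
  have hq : q ≠ 0 := by omega
  set g : ℕ → ℝ := fun m ↦ z ^ ((m : ℝ) - n) / (m + p / q)
  have hw : ‖((z ^ ((1 : ℝ) / q) : ℝ) : ℂ)‖ < 1 := by
    rw [norm_real, Real.norm_of_nonneg (by positivity)]
    exact Real.rpow_lt_one hz0.le hz1 (by positivity)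
  have hterm (m : ℕ) : z ^ (-(n : ℝ) - p / q) *
      (q * (((q * m + p : ℕ) : ℝ)⁻¹ * (z ^ ((1 : ℝ) / q)) ^ (q * m + p))) = g m := by
    have hrpow : z ^ (-(n : ℝ) - p / q) * z ^ ((m : ℝ) + p / q) = z ^ ((m : ℝ) - n) := by
      rw [← Real.rpow_add hz0]; ring_nf
    simp only [g, rpow_one_div_pow_mul_add hz0.le hq, ← hrpow]
    push_cast
    field_simp
  have hseries : HasSum (fun m ↦ (g m : ℂ)) (((z ^ (-(n : ℝ) - p / q) : ℝ) : ℂ) * -_) :=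
    ((hasSum_neg_sum_exp_mul_log hpq hw).mul_left _).congr_fun fun m ↦ by
      rw [← hterm]; push_cast; rfl
  have hintegral : HasSum (fun i ↦ (g (i + n) : ℂ))
      (∫ t in (0:ℝ)..1, t ^ (ν - 1) / (1 - z * t) : ℝ) := by
    rw [hasSum_ofReal]
    refine (hasSum_integral_rpow_div_one_sub_mul (hν ▸ by positivity)
      (abs_lt.2 ⟨by linarith, hz1⟩)).congr_fun fun i ↦ ?_
    simp only [g, hν]
    push_cast
    rw [add_sub_cancel_right, Real.rpow_natCast]
    ring
  rw [hintegral.unique ((hasSum_nat_add_iff' n).2 hseries)]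
  push_cast
  ring
end
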